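/- arXiv:2204.04366 — 2 statements merged into one kernel-verified Lean document; each statement's English description precedes it below -/
import Mathlib

section
/- Fix an integer m ≥ 1 and let (ℓ, k) be a pair of integers with ℓ even, 0 ≤ ℓ, k ≤ 2^m − 1 and k ≤ ℓ. Then: (a) the set { r : 0 ≤ r ≤ m−1 and C(ℓ, 2^r) ≡ 0 (mod 2) } is nonempty; (b) writing j for its maximum, the set { r : j ≤ r ≤ m−1 and C(k, 2^r) ≡ 0 (mod 2) } is nonempty; (c) writing i for the minimum of the latter set, one has 2^m − 2^{i+1} ≤ ℓ and k + 2^i ≤ 2^m − 1. In particular the map φ(ℓ,k) = (ℓ − (2^m − 2^{i+1}), k + 2^i) is well defined on pairs with k ≤ ℓ. -/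
/-!
By Lucas' theorem `C(n, 2^r)` is even exactly when bit `r` of `n` is `0`, so `j` is the highest
zero bit of `ℓ` below `m` (there is one, as `ℓ` is even) and `i` is the lowest zero bit of `k` in
`[j, m)`. The bits of `ℓ` in `(j, m)` are all `1` and bit `j` is `0`, so
`2^m - 2^(j+1) ≤ ℓ < 2^m - 2^j`. Since `k ≤ ℓ`, the bits of `k` in `[j, m)` are not all `1`,
so `i` exists; and setting the zero bit `i` of `k < 2^m` keeps it below `2^m`.
-/

/-- For a pair `(ℓ, k)` in `S`, the index
`j = max { r : 0 ≤ r ≤ m−1 and C(ℓ, 2^r) ≡ 0 (mod 2) }`. -/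
noncomputable def paperJ (m ℓ : ℕ) : ℕ :=
  sSup {r : ℕ | r ≤ m - 1 ∧ Even (Nat.choose ℓ (2 ^ r))}

/-- For a pair `(ℓ, k)` in `S`, the index
`i = min { r : j ≤ r ≤ m−1 and C(k, 2^r) ≡ 0 (mod 2) }`. -/
noncomputable def paperI (m ℓ k : ℕ) : ℕ :=
  sInf {r : ℕ | paperJ m ℓ ≤ r ∧ r ≤ m - 1 ∧ Even (Nat.choose k (2 ^ r))}

namespace Nat

theorem even_choose_two_pow_iff (n r : ℕ) : Even (n.choose (2 ^ r)) ↔ n.testBit r = false := by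
  induction r generalizing n with
  | zero => simp [Nat.even_iff, testBit_zero]
  | succ r ih =>
    have := Fact.mk prime_two
    have lucas : n.choose (2 ^ (r + 1)) % 2 = (n / 2).choose (2 ^ r) % 2 := by
      simpa [Nat.ModEq, pow_succ] using
        Choose.choose_modEq_choose_mod_mul_choose_div_nat (p := 2) (n := n) (k := 2 ^ (r + 1))
    rw [Nat.even_iff, lucas, ← Nat.even_iff, ih, testBit_add_one]

theorem add_two_pow_lt_two_pow_of_testBit_eq_false {x m i : ℕ} (hx : x < 2 ^ m) (hi : i < m)
    (h : x.testBit i = false) : x + 2 ^ i < 2 ^ m := by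
  have : 2 ^ i ≤ 2 ^ m - (x + 1) :=
    ge_two_pow_of_testBit (by simp [testBit_two_pow_sub_succ hx, hi, h])
  omega

theorem two_pow_sub_two_pow_le_of_testBit {n a m : ℕ}
    (h : ∀ r, a ≤ r → r < m → n.testBit r = true) : 2 ^ m - 2 ^ a ≤ n := by
  have hx : n % 2 ^ m < 2 ^ m := mod_lt _ (by positivity)
  have : 2 ^ m - (n % 2 ^ m + 1) < 2 ^ a := lt_pow_two_of_testBit _ fun r hr => by
    rw [testBit_two_pow_sub_succ hx, testBit_mod_two_pow]
    by_cases hrm : r < m <;> simp [hrm, h r hr]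
  have := mod_le n (2 ^ m)
  omega

end Nat

section paperIndices

variable {m ℓ k : ℕ}

theorem bddAbove_paperJ_set :
    BddAbove {r : ℕ | r ≤ m - 1 ∧ Even (Nat.choose ℓ (2 ^ r))} :=
  ⟨m - 1, fun _ hr => hr.1⟩

theorem paperJ_set_nonempty (hℓ : Even ℓ) :
    {r : ℕ | r ≤ m - 1 ∧ Even (Nat.choose ℓ (2 ^ r))}.Nonempty :=
  ⟨0, Nat.zero_le _, by simpa using hℓ⟩

theorem testBit_paperJ (hm : 1 ≤ m) (hℓ : Even ℓ) :
    paperJ m ℓ < m ∧ ℓ.testBit (paperJ m ℓ) = false := by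
  obtain ⟨hjm, hj⟩ : paperJ m ℓ ∈ {r : ℕ | r ≤ m - 1 ∧ Even (Nat.choose ℓ (2 ^ r))} :=
    Nat.sSup_mem (paperJ_set_nonempty hℓ) bddAbove_paperJ_set
  exact ⟨by omega, (Nat.even_choose_two_pow_iff _ _).1 hj⟩

theorem testBit_of_paperJ_lt {r : ℕ} (hjr : paperJ m ℓ < r) (hrm : r < m) :
    ℓ.testBit r = true := by
  by_contra h
  have hr : r ∈ {r : ℕ | r ≤ m - 1 ∧ Even (Nat.choose ℓ (2 ^ r))} :=
    ⟨by omega, (Nat.even_choose_two_pow_iff _ _).2 (by simpa using h)⟩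
  exact (le_csSup bddAbove_paperJ_set hr).not_gt hjr

theorem two_pow_sub_two_pow_paperJ_succ_le : 2 ^ m - 2 ^ (paperJ m ℓ + 1) ≤ ℓ :=
  Nat.two_pow_sub_two_pow_le_of_testBit fun _ hjr hrm => testBit_of_paperJ_lt hjr hrm

theorem paperI_set_nonempty (hm : 1 ≤ m) (hℓ : Even ℓ) (hℓm : ℓ < 2 ^ m) (hkℓ : k ≤ ℓ) :
    {r : ℕ | paperJ m ℓ ≤ r ∧ r ≤ m - 1 ∧ Even (Nat.choose k (2 ^ r))}.Nonempty := by
  obtain ⟨hjm, hj⟩ := testBit_paperJ hm hℓ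
  by_contra hempty
  have hk : 2 ^ m - 2 ^ paperJ m ℓ ≤ k := Nat.two_pow_sub_two_pow_le_of_testBit fun r hjr hrm => by
    by_contra h
    exact hempty ⟨r, hjr, by omega, (Nat.even_choose_two_pow_iff _ _).2 (by simpa using h)⟩
  have hℓ' := Nat.add_two_pow_lt_two_pow_of_testBit_eq_false hℓm hjm hj
  omega

end paperIndices

theorem stmt_1_general (m ℓ k : ℕ) (hm : 1 ≤ m) (hle : Even ℓ)
    (hl : ℓ ≤ 2 ^ m - 1) (hkl : k ≤ ℓ) :
    {r : ℕ | r ≤ m - 1 ∧ Even (Nat.choose ℓ (2 ^ r))}.Nonempty ∧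
    {r : ℕ | paperJ m ℓ ≤ r ∧ r ≤ m - 1 ∧ Even (Nat.choose k (2 ^ r))}.Nonempty ∧
    2 ^ m - 2 ^ (paperI m ℓ k + 1) ≤ ℓ ∧
    k + 2 ^ paperI m ℓ k ≤ 2 ^ m - 1 := by
  have hℓm : ℓ < 2 ^ m := by have := Nat.one_le_two_pow (n := m); omega
  have hI := paperI_set_nonempty hm hle hℓm hkl
  obtain ⟨hji, him, hi⟩ :
      paperI m ℓ k ∈ {r | paperJ m ℓ ≤ r ∧ r ≤ m - 1 ∧ Even (k.choose (2 ^ r))} :=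
    Nat.sInf_mem hI
  refine ⟨paperJ_set_nonempty hle, hI, ?_, ?_⟩
  · calc 2 ^ m - 2 ^ (paperI m ℓ k + 1) ≤ 2 ^ m - 2 ^ (paperJ m ℓ + 1) := by
          gcongr; omega
      _ ≤ ℓ := two_pow_sub_two_pow_paperJ_succ_le
  · have := Nat.add_two_pow_lt_two_pow_of_testBit_eq_false (by omega : k < 2 ^ m) (by omega)
      ((Nat.even_choose_two_pow_iff _ _).1 hi)
    omega

/-- Well-definedness of the map `φ` of Lemma 6.18: for `(ℓ,k)` with `ℓ` even,
`0 ≤ ℓ, k ≤ 2^m − 1` and `k ≤ ℓ`: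
(a) the set defining `j` is nonempty;
(b) the set defining `i` is nonempty;
(c) `2^m − 2^{i+1} ≤ ℓ` and `k + 2^i ≤ 2^m − 1`. -/
theorem stmt_1 (m ℓ k : ℕ) (hm : 1 ≤ m) (hle : Even ℓ)
    (hl : ℓ ≤ 2 ^ m - 1) (hk : k ≤ 2 ^ m - 1) (hkl : k ≤ ℓ) :
    {r : ℕ | r ≤ m - 1 ∧ Even (Nat.choose ℓ (2 ^ r))}.Nonempty ∧
    {r : ℕ | paperJ m ℓ ≤ r ∧ r ≤ m - 1 ∧ Even (Nat.choose k (2 ^ r))}.Nonempty ∧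
    2 ^ m - 2 ^ (paperI m ℓ k + 1) ≤ ℓ ∧
    k + 2 ^ paperI m ℓ k ≤ 2 ^ m - 1 :=
  stmt_1_general m ℓ k hm hle hl hkl
end

section
/- Fix an integer m ≥ 1 and let ℓ, k be integers with ℓ even, 0 ≤ ℓ, k ≤ 2^m − 1 and ℓ < k. Then there exist UNIQUE non-negative integers i, κ, n such that 2^i ≤ κ < 2^{i+1}, κ − 2^i ≤ ℓ < κ, and k = κ + 2^{i+1}·n. -/
/-!
Writing `f i = k % 2 ^ i`, the conditions force `κ = f (i + 1)` and `n = k / 2 ^ (i + 1)`, and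
they say exactly that `f i ≤ ℓ < f (i + 1)`: since `f (i + 1) = f i + 2 ^ i * (bit i of k)`, the
jump `f i < f (i + 1)` means that bit `i` of `k` is set, i.e. `2 ^ i ≤ κ` and `κ - 2 ^ i = f i`.
As `f` is monotone with `f 0 = 0 ≤ ℓ < k = f k`, there is exactly one such `i`.
-/

theorem Monotone.existsUnique_le_lt_succ {α : Type*} [LinearOrder α] {f : ℕ → α} (hf : Monotone f)
    {a : α} (h₀ : f 0 ≤ a) (hN : ∃ N, a < f N) : ∃! i, f i ≤ a ∧ a < f (i + 1) := by
  classical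
  have hpos : Nat.find hN ≠ 0 := fun h => (Nat.find_spec hN).not_ge (h ▸ h₀)
  obtain ⟨i, hi⟩ := Nat.exists_eq_succ_of_ne_zero hpos
  have hfi : f i ≤ a := not_lt.mp (Nat.find_min hN (by omega))
  have hfi' : a < f (i + 1) := by simpa [hi] using Nat.find_spec hN
  refine ⟨i, ⟨hfi, hfi'⟩, ?_⟩
  have key : ∀ {i j}, i < j → f j ≤ a → a < f (i + 1) → False := fun hij hfj hfi =>
    (hfi.trans_le (hf hij)).not_ge hfj
  rintro j ⟨hj, hj'⟩
  obtain hji | rfl | hij := lt_trichotomy j i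
  · exact (key hji hfi hj').elim
  · rfl
  · exact (key hij hj hfi').elim

namespace Nat

theorem monotone_mod_pow (k b : ℕ) : Monotone fun i => k % b ^ i :=
  monotone_nat_of_le_succ fun _ => mod_pow_succ ▸ le_add_right _ _

theorem mod_two_pow_succ_eq_of_lt {k i : ℕ} (h : k % 2 ^ i < k % 2 ^ (i + 1)) :
    k % 2 ^ (i + 1) = k % 2 ^ i + 2 ^ i := by
  have hdigit : k / 2 ^ i % 2 < 2 := mod_lt _ two_pos
  rw [mod_pow_succ] at h ⊢
  have hdigit_ne : k / 2 ^ i % 2 ≠ 0 := by rintro h0; simp [h0] at h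
  rw [show k / 2 ^ i % 2 = 1 by omega, mul_one]

theorem two_pow_le_and_eq_add_mul_iff {ℓ k i κ n : ℕ} :
    (2 ^ i ≤ κ ∧ κ < 2 ^ (i + 1) ∧ κ - 2 ^ i ≤ ℓ ∧ ℓ < κ ∧ k = κ + 2 ^ (i + 1) * n) ↔
      (k % 2 ^ i ≤ ℓ ∧ ℓ < k % 2 ^ (i + 1)) ∧ κ = k % 2 ^ (i + 1) ∧ n = k / 2 ^ (i + 1) := by
  have h2 : 2 ^ (i + 1) = 2 ^ i + 2 ^ i := by rw [pow_succ]; ring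
  have hmod : k % 2 ^ (i + 1) % 2 ^ i = k % 2 ^ i :=
    mod_mod_of_dvd k (pow_dvd_pow 2 i.le_succ)
  constructor
  · rintro ⟨hge, hlt, hsub, hℓ, rfl⟩
    obtain ⟨hn, hκ⟩ := (Nat.div_mod_unique (by positivity)).mpr ⟨rfl, hlt⟩
    rw [hκ] at hmod ⊢
    have hκmod : κ % 2 ^ i = κ - 2 ^ i := by
      rw [mod_eq_sub_mod hge, mod_eq_of_lt (by omega)]
    exact ⟨⟨by omega, hℓ⟩, rfl, hn.symm⟩
  · rintro ⟨⟨hlow, hℓ⟩, rfl, rfl⟩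
    have hjump := mod_two_pow_succ_eq_of_lt (hlow.trans_lt hℓ)
    exact ⟨by omega, mod_lt _ (by positivity), by omega, hℓ, (mod_add_div k _).symm⟩

end Nat

theorem stmt_3_general (ℓ k : ℕ) (hlk : ℓ < k) :
    ∃! t : ℕ × ℕ × ℕ,
      2 ^ t.1 ≤ t.2.1 ∧ t.2.1 < 2 ^ (t.1 + 1) ∧
      t.2.1 - 2 ^ t.1 ≤ ℓ ∧ ℓ < t.2.1 ∧
      k = t.2.1 + 2 ^ (t.1 + 1) * t.2.2 := by
  obtain ⟨i, hi, huniq⟩ := (Nat.monotone_mod_pow k 2).existsUnique_le_lt_succ (a := ℓ)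
    (by simp [Nat.mod_one]) ⟨k, by rwa [Nat.mod_eq_of_lt Nat.lt_two_pow_self]⟩
  refine ⟨(i, k % 2 ^ (i + 1), k / 2 ^ (i + 1)), Nat.two_pow_le_and_eq_add_mul_iff.mpr
    ⟨hi, rfl, rfl⟩, ?_⟩
  rintro ⟨j, κ, n⟩ h
  obtain ⟨hj, hκ, hn⟩ := Nat.two_pow_le_and_eq_add_mul_iff.mp h
  dsimp only at hj hκ hn
  subst hκ hn
  rw [huniq j hj]

/-- The parametrization used in Theorem 6.20(2): for `ℓ` even with
`0 ≤ ℓ, k ≤ 2^m − 1` and `ℓ < k`, there exist unique non-negative integers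
`i, κ, n` with `2^i ≤ κ < 2^{i+1}`, `κ − 2^i ≤ ℓ < κ`, and `k = κ + 2^{i+1}·n`. -/
theorem stmt_3 (m ℓ k : ℕ) (hm : 1 ≤ m) (hle : Even ℓ)
    (hl : ℓ ≤ 2 ^ m - 1) (hk : k ≤ 2 ^ m - 1) (hlk : ℓ < k) :
    ∃! t : ℕ × ℕ × ℕ,
      2 ^ t.1 ≤ t.2.1 ∧ t.2.1 < 2 ^ (t.1 + 1) ∧
      t.2.1 - 2 ^ t.1 ≤ ℓ ∧ ℓ < t.2.1 ∧
      k = t.2.1 + 2 ^ (t.1 + 1) * t.2.2 :=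
  stmt_3_general ℓ k hlk
end
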